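/- Let Per(g) = {(x,y) ∈ ℚ̄² : g^n(x,y) = (x,y) for some n ≥ 1} and Per(f) = {(x,y,z) ∈ ℚ̄³ : f^n(x,y,z) = (x,y,z) for some n ≥ 1}. Define φ : Per(g) → Per(f) by φ(x₀,y₀) = (x₀,y₀,z₀), where n is the exact (minimal) period of (x₀,y₀) under g, (x_i,y_i) := g^i(x₀,y₀) for 0 ≤ i ≤ n−1, and z₀ = (1/(2^n − 1)) · Σ_{i=0}^{n−1} 2^{n−1−i} y_i. Then φ is a well-defined bijection from Per(g) onto Per(f), and if (x₀,y₀) has exact period n under g then φ(x₀,y₀) has exact period n under f. -/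
import Mathlib


/-- A fixed algebraic closure of `ℚ`. -/
noncomputable def Qbar : Type := AlgebraicClosure ℚ

noncomputable instance : Field Qbar := inferInstanceAs (Field (AlgebraicClosure ℚ))
noncomputable instance : Algebra ℚ Qbar := inferInstanceAs (Algebra ℚ (AlgebraicClosure ℚ))

/-- The Hénon map `g(x,y) = (y, x + y - y³)` on `ℚ̄²`. -/
noncomputable def gA (P : Qbar × Qbar) : Qbar × Qbar :=
  (P.2, P.1 + P.2 - P.2 ^ 3)

/-- The automorphism `f(x,y,z) = (y, x + y - y³, 2z - y)` on `ℚ̄³`. -/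
noncomputable def fA (P : Qbar × Qbar × Qbar) : Qbar × Qbar × Qbar :=
  (P.2.1, P.1 + P.2.1 - P.2.1 ^ 3, 2 * P.2.2 - P.2.1)

/-- The set of `g`-periodic points of `ℚ̄²`. -/
def PerG : Set (Qbar × Qbar) := {P | ∃ n, 1 ≤ n ∧ gA^[n] P = P}

/-- The set of `f`-periodic points of `ℚ̄³`. -/
def PerF : Set (Qbar × Qbar × Qbar) := {P | ∃ n, 1 ≤ n ∧ fA^[n] P = P}

/-- `φ(x₀,y₀) = (x₀, y₀, z₀)` with
`z₀ = (1/(2^n - 1)) Σ_{i=0}^{n-1} 2^{n-1-i} y_i`, where `n` is the exact (minimal) period of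
`(x₀,y₀)` under `g` and `(x_i,y_i) = g^i(x₀,y₀)`. -/
noncomputable def phiMap (P : Qbar × Qbar) : Qbar × Qbar × Qbar :=
  (P.1, P.2,
    ((2 : Qbar) ^ Function.minimalPeriod gA P - 1)⁻¹ *
      ∑ i ∈ Finset.range (Function.minimalPeriod gA P),
        2 ^ (Function.minimalPeriod gA P - 1 - i) * (gA^[i] P).2)

noncomputable instance : CharZero Qbar := inferInstanceAs (CharZero (AlgebraicClosure ℚ))

noncomputable def Sn (n : ℕ) (P : Qbar × Qbar) : Qbar :=
  ∑ i ∈ Finset.range n, 2 ^ (n - 1 - i) * (gA^[i] P).2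

lemma fA_iter (k : ℕ) (x y z : Qbar) :
    fA^[k] (x, y, z) = ((gA^[k] (x, y)).1, (gA^[k] (x, y)).2, 2 ^ k * z - Sn k (x, y)) := by
  induction k with
  | zero => simp [Sn]
  | succ k ih =>
    rw [Function.iterate_succ_apply', ih, Function.iterate_succ_apply' gA]
    refine Prod.ext rfl (Prod.ext rfl ?_)
    show 2 * (2 ^ k * z - Sn k (x, y)) - (gA^[k] (x, y)).2 = 2 ^ (k+1) * z - Sn (k+1) (x, y)
    have hS : Sn (k+1) (x, y) = 2 * Sn k (x, y) + (gA^[k] (x, y)).2 := by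
      rw [Sn, Sn, Finset.sum_range_succ, Finset.mul_sum]
      have h0 : k + 1 - 1 - k = 0 := by omega
      rw [h0, pow_zero, one_mul]
      congr 1
      refine Finset.sum_congr rfl fun i hi => ?_
      rw [Finset.mem_range] at hi
      have : k + 1 - 1 - i = (k - 1 - i) + 1 := by omega
      rw [this, pow_succ]; ring
    rw [hS, pow_succ]; ring

lemma two_pow_sub_one_ne (n : ℕ) (hn : 1 ≤ n) : (2 : Qbar) ^ n - 1 ≠ 0 := by
  rw [sub_ne_zero]
  intro h
  have h2 : ((2 ^ n : ℕ) : Qbar) = ((1 : ℕ) : Qbar) := by push_cast; exact h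
  have := Nat.cast_injective (R := Qbar) h2
  have h3 := Nat.one_lt_two_pow_iff.mpr (by omega : n ≠ 0)
  omega

lemma phiMap_eq (P : Qbar × Qbar) :
    phiMap P = (P.1, P.2, ((2 : Qbar) ^ Function.minimalPeriod gA P - 1)⁻¹ *
      Sn (Function.minimalPeriod gA P) P) := rfl

/-- Forward fixedness: if `gA^[n] P = P` with `n ≥ 1`, the point with
`z = (2^n-1)⁻¹ Sn n P` is fixed by `fA^[n]`. -/
lemma fA_fix (P : Qbar × Qbar) (n : ℕ) (hn : 1 ≤ n) (hP : gA^[n] P = P) :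
    fA^[n] (P.1, P.2, ((2:Qbar)^n - 1)⁻¹ * Sn n P) =
      (P.1, P.2, ((2:Qbar)^n - 1)⁻¹ * Sn n P) := by
  rw [fA_iter]
  have hP' : gA^[n] (P.1, P.2) = (P.1, P.2) := by rw [Prod.mk.eta, hP]
  rw [hP']
  refine Prod.ext rfl (Prod.ext rfl ?_)
  show 2 ^ n * (((2:Qbar)^n - 1)⁻¹ * Sn n (P.1, P.2)) - Sn n (P.1, P.2)
      = ((2:Qbar)^n - 1)⁻¹ * Sn n P
  rw [Prod.mk.eta]
  have h2 := two_pow_sub_one_ne n hn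
  field_simp
  ring

/-- Backward: a fixed point of `fA^[m]` projects to a fixed point of `gA^[m]`
and its `z`-coordinate is determined. -/
lemma fA_fix_inv (x y z : Qbar) (m : ℕ) (hm : 1 ≤ m) (h : fA^[m] (x, y, z) = (x, y, z)) :
    gA^[m] (x, y) = (x, y) ∧ z = ((2:Qbar)^m - 1)⁻¹ * Sn m (x, y) := by
  rw [fA_iter] at h
  rw [Prod.ext_iff, Prod.ext_iff] at h
  obtain ⟨h1, h2, h3⟩ := h
  refine ⟨Prod.ext h1 h2, ?_⟩
  have h2' := two_pow_sub_one_ne m hm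
  field_simp
  linear_combination h3

/-- `φ` is a well-defined bijection from `Per(g)` onto `Per(f)`, and it preserves
the exact period. -/
theorem stmt3 :
    Set.BijOn phiMap PerG PerF ∧
    ∀ P ∈ PerG, Function.minimalPeriod fA (phiMap P) = Function.minimalPeriod gA P := by
  -- basic facts about points of PerG
  have hmp : ∀ P ∈ PerG, 1 ≤ Function.minimalPeriod gA P := by
    rintro P ⟨k, hk, hkP⟩
    exact (Function.IsPeriodicPt.minimalPeriod_pos (by omega) hkP)
  have hfix : ∀ P ∈ PerG, fA^[Function.minimalPeriod gA P] (phiMap P) = phiMap P := by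
    intro P hP
    rw [phiMap_eq]
    exact fA_fix P _ (hmp P hP) (Function.iterate_minimalPeriod)
  have hmaps : ∀ P ∈ PerG, phiMap P ∈ PerF := fun P hP =>
    ⟨Function.minimalPeriod gA P, hmp P hP, hfix P hP⟩
  have hper : ∀ P ∈ PerG, Function.minimalPeriod fA (phiMap P) = Function.minimalPeriod gA P := by
    intro P hP
    have hpos : 0 < Function.minimalPeriod fA (phiMap P) :=
      Function.IsPeriodicPt.minimalPeriod_pos (hmp P hP) (hfix P hP)
    -- fA^[m] fixes phiMap P, project to g
    set m := Function.minimalPeriod fA (phiMap P) with hm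
    have hfm : fA^[m] (phiMap P) = phiMap P := Function.iterate_minimalPeriod
    rw [phiMap_eq] at hfm
    have := (fA_fix_inv _ _ _ m hpos hfm).1
    rw [Prod.mk.eta] at this
    have hdvd1 : Function.minimalPeriod gA P ∣ m :=
      Function.IsPeriodicPt.minimalPeriod_dvd this
    have hdvd2 : m ∣ Function.minimalPeriod gA P :=
      Function.IsPeriodicPt.minimalPeriod_dvd (hfix P hP)
    exact Nat.dvd_antisymm hdvd2 hdvd1
  refine ⟨⟨hmaps, ?_, ?_⟩, hper⟩
  · -- injective on PerG
    intro P _ Q _ h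
    rw [phiMap_eq, phiMap_eq, Prod.ext_iff, Prod.ext_iff] at h
    exact Prod.ext h.1 h.2.1
  · -- surjective onto PerF
    rintro Q ⟨m, hm, hQ⟩
    set P : Qbar × Qbar := (Q.1, Q.2.1) with hPdef
    have hQ' : fA^[m] (Q.1, Q.2.1, Q.2.2) = (Q.1, Q.2.1, Q.2.2) := hQ
    obtain ⟨hg, hz⟩ := fA_fix_inv Q.1 Q.2.1 Q.2.2 m hm hQ'
    have hPG : P ∈ PerG := ⟨m, hm, hg⟩
    refine ⟨P, hPG, ?_⟩
    -- phiMap P is fixed by fA^[n], n ∣ m, so fixed by fA^[m]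
    have hn := hmp P hPG
    have hdvd : Function.minimalPeriod gA P ∣ m := Function.IsPeriodicPt.minimalPeriod_dvd hg
    have hfixn : Function.IsPeriodicPt fA (Function.minimalPeriod gA P) (phiMap P) :=
      hfix P hPG
    have hfixm : fA^[m] (phiMap P) = phiMap P := hfixn.trans_dvd hdvd
    rw [phiMap_eq] at hfixm
    obtain ⟨_, hz'⟩ := fA_fix_inv _ _ _ m hm hfixm
    rw [phiMap_eq, hz']
    exact Prod.ext rfl (Prod.ext rfl hz.symm)
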